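/- arXiv:1305.5287 — 3 statements merged into one kernel-verified Lean document; each statement's English description precedes it below -/
import Mathlib

section
/- Let ξ_1 = (r_1, μ_1, Δ_1) and ξ_2 = (r_2, μ_2, Δ_2) be linearly independent Chern characters on P^2 with nonzero ranks and Δ_1, Δ_2 ≥ 0, and let ζ = (r, μ, Δ) be a Chern character with r ≠ 0 and Δ > -1/8 such that χ(ζ*, ξ_1) = χ(ζ*, ξ_2) = 0. Then μ_1 ≠ μ_2, and the potential Bridgeland wall W(ξ_1, ξ_2) is a semicircle with center (s, 0) and radius ρ satisfying μ = -s - 3/2 and 2Δ = ρ² - 1/4. -/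
/-- The Hilbert polynomial `P(m) = (m² + 3m + 2)/2` of `O_{P²}`. -/
noncomputable def PHilb (m : ℝ) : ℝ := (m ^ 2 + 3 * m + 2) / 2

/-- The full Chern character `(ch₀, ch₁, ch₂) = (r, rμ, r(μ²/2 - Δ))` of an object of
rank `r`, slope `μ`, and discriminant `Δ`, as a vector in `ℝ³`. -/
noncomputable def chernVec (r μ Δ : ℝ) : Fin 3 → ℝ := ![r, r * μ, r * (μ ^ 2 / 2 - Δ)]

/-- Let `ξ₁ = (r₁, μ₁, Δ₁)` and `ξ₂ = (r₂, μ₂, Δ₂)` be linearly independent Chern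
characters on `P²` with nonzero ranks and `Δ₁, Δ₂ ≥ 0`, and let `ζ = (r, μ, Δ)` be a
Chern character with `r ≠ 0`, `Δ > -1/8`, and `χ(ζ*, ξ₁) = χ(ζ*, ξ₂) = 0`
(by Riemann–Roch, `χ(ζ*, ξᵢ) = r·rᵢ·(P(μᵢ + μ) - Δ - Δᵢ)`). Then `μ₁ ≠ μ₂`, and
the potential Bridgeland wall `W(ξ₁, ξ₂)` is a semicircle with center `(s, 0)`,
`s = (μ₁+μ₂)/2 - (Δ₁-Δ₂)/(μ₁-μ₂)`, and radius `ρ`, `ρ² = (s-μ₁)² - 2Δ₁`,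
satisfying `μ = -s - 3/2` and `2Δ = ρ² - 1/4`. -/
theorem stmt8 (r₁ r₂ r μ₁ μ₂ μ Δ₁ Δ₂ Δ : ℝ)
    (hr₁ : r₁ ≠ 0) (hr₂ : r₂ ≠ 0) (hr : r ≠ 0)
    (hΔ₁ : 0 ≤ Δ₁) (hΔ₂ : 0 ≤ Δ₂) (hΔ : -1/8 < Δ)
    (hind : LinearIndependent ℝ ![chernVec r₁ μ₁ Δ₁, chernVec r₂ μ₂ Δ₂])
    (hχ₁ : r * r₁ * (PHilb (μ₁ + μ) - Δ - Δ₁) = 0)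
    (hχ₂ : r * r₂ * (PHilb (μ₂ + μ) - Δ - Δ₂) = 0) :
    μ₁ ≠ μ₂ ∧
      μ = -((μ₁ + μ₂) / 2 - (Δ₁ - Δ₂) / (μ₁ - μ₂)) - 3/2 ∧
      2 * Δ = ((((μ₁ + μ₂) / 2 - (Δ₁ - Δ₂) / (μ₁ - μ₂)) - μ₁) ^ 2 - 2 * Δ₁) - 1/4 := by
  have E₁ : PHilb (μ₁ + μ) - Δ - Δ₁ = 0 := by
    rcases mul_eq_zero.1 hχ₁ with h | h
    · exact absurd h (mul_ne_zero hr hr₁)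
    · exact h
  have E₂ : PHilb (μ₂ + μ) - Δ - Δ₂ = 0 := by
    rcases mul_eq_zero.1 hχ₂ with h | h
    · exact absurd h (mul_ne_zero hr hr₂)
    · exact h
  unfold PHilb at E₁ E₂
  have hne : μ₁ ≠ μ₂ := by
    intro heq
    subst heq
    have hΔeq : Δ₁ = Δ₂ := by linarith
    subst hΔeq
    have := Fintype.linearIndependent_iff.1 hind ![r₂, -r₁] (by
      funext j
      simp [Fin.sum_univ_two, chernVec]
      fin_cases j <;> simp <;> ring) 0
    simp at this
    exact hr₂ this
  refine ⟨hne, ?_, ?_⟩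
  · have h : μ₁ - μ₂ ≠ 0 := sub_ne_zero.2 hne
    field_simp
    nlinarith [sq_nonneg (μ₁ - μ₂)]
  · have h : μ₁ - μ₂ ≠ 0 := sub_ne_zero.2 hne
    have hμ : μ = -((μ₁ + μ₂) / 2 - (Δ₁ - Δ₂) / (μ₁ - μ₂)) - 3/2 := by
      field_simp
      nlinarith [sq_nonneg (μ₁ - μ₂)]
    rw [hμ] at E₁
    have hΔval : Δ = ((μ₁ + (-((μ₁ + μ₂) / 2 - (Δ₁ - Δ₂) / (μ₁ - μ₂)) - 3/2)) ^ 2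
        + 3 * (μ₁ + (-((μ₁ + μ₂) / 2 - (Δ₁ - Δ₂) / (μ₁ - μ₂)) - 3/2)) + 2) / 2 - Δ₁ := by
      linarith
    rw [hΔval]
    ring
end

section
/- Let Z be a zero-dimensional monomial scheme of degree n with block diagram D having r(D) rows, and let w_k = deg W_k where W_k is the scheme of boxes above the k-th row. Then the wall W(I_{W_k}(-k), I_Z) is centered at (s_k, 0) with s_k = -k/2 + (w_k - n)/k, and the orthogonal invariants satisfy μ_k(I_Z) := -s_k - 3/2 = (1/k) ∑_{j=1}^k (h_j + j - 1) - 1 where h_j is the length of the j-th row of D; i.e., the wall center recovers the combinatorial horizontal slope. -/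
open Finset

/-- Let `Z` be a zero-dimensional monomial scheme of degree `n` whose block diagram has
`r` rows of non-increasing lengths `h 1 ≥ h 2 ≥ ⋯ ≥ h r`, and for `1 ≤ k ≤ r` let
`w_k` be the degree of the part of the diagram above the `k`-th row. Computing slopes
and discriminants from `ch(I_{W_k}(-k)) = (1, -k, k²/2 - w_k)` and
`ch(I_Z) = (1, 0, -n)`, the wall `W(I_{W_k}(-k), I_Z)` is centered at `(s_k, 0)` with
`s_k = -k/2 + (w_k - n)/k`, and `μ_k(I_Z) := -s_k - 3/2` equals the combinatorial
horizontal slope `(1/k) ∑_{j=1}^k (h_j + j - 1) - 1`. -/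
theorem stmt11 (h : ℕ → ℕ) (r k : ℕ) (hk : 1 ≤ k) (hkr : k ≤ r)
    (hrow : ∀ j, 1 ≤ j → j < r → h (j + 1) ≤ h j)
    (n w : ℕ)
    (hn : n = ∑ j ∈ Finset.range r, h (j + 1))
    (hw : w = ∑ j ∈ Finset.range (r - k), h (k + j + 1)) :
    let μ₁ : ℝ := -(k : ℝ) / 1
    let Δ₁ : ℝ := μ₁ ^ 2 / 2 - ((k : ℝ) ^ 2 / 2 - w) / 1
    let μ₂ : ℝ := 0 / 1
    let Δ₂ : ℝ := μ₂ ^ 2 / 2 - (-(n : ℝ)) / 1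
    let s : ℝ := (μ₁ + μ₂) / 2 - (Δ₁ - Δ₂) / (μ₁ - μ₂)
    s = -(k : ℝ) / 2 + ((w : ℝ) - n) / k ∧
    -s - 3 / 2 = (∑ j ∈ Finset.range k, ((h (j + 1) : ℝ) + j)) / k - 1 := by
  intro μ₁ Δ₁ μ₂ Δ₂ s
  have hk0 : (k : ℝ) ≠ 0 := Nat.cast_ne_zero.mpr (by omega)
  have hsplit : n = (∑ j ∈ Finset.range k, h (j + 1)) + w := by
    rw [hn, hw]
    have hr : r = k + (r - k) := by omega
    rw [hr, Finset.sum_range_add]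
    have h2 : k + (r - k) - k = r - k := by omega
    rw [h2]
  have hs : s = -(k : ℝ) / 2 + ((w : ℝ) - n) / k := by
    have hd : Δ₁ - Δ₂ = (w : ℝ) - n := by
      simp only [Δ₁, Δ₂, μ₁, μ₂, div_one]; ring
    simp only [s]
    rw [hd]
    simp only [μ₁, μ₂, div_one, zero_div, add_zero, sub_zero, div_neg, sub_neg_eq_add]
  refine ⟨hs, ?_⟩
  rw [hs]
  have hsum : (∑ j ∈ Finset.range k, ((h (j + 1) : ℝ) + j))
      = ((n : ℝ) - w) + (k : ℝ) * ((k : ℝ) - 1) / 2 := by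
    rw [Finset.sum_add_distrib]
    have h1 : (∑ j ∈ Finset.range k, ((h (j + 1) : ℝ))) = (n : ℝ) - w := by
      have : ((∑ j ∈ Finset.range k, h (j + 1) : ℕ) : ℝ) = (n : ℝ) - w := by
        rw [hsplit]; push_cast; ring
      rw [← this]; push_cast; rfl
    have h2 : (∑ j ∈ Finset.range k, (j : ℝ)) = (k : ℝ) * ((k : ℝ) - 1) / 2 := by
      have hg := congrArg (Nat.cast : ℕ → ℝ) (Finset.sum_range_id_mul_two k)
      push_cast [Nat.cast_sub hk] at hg
      linarith
    rw [h1, h2]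
  rw [hsum]
  field_simp
  ring
end

section
/- (Nesting inequality, rank 1 horizontal case.) Let Z be a monomial scheme with row lengths h_1 ≥ h_2 ≥ ... and horizontal slopes μ_m = (1/m)∑_{j=1}^m(h_j + j - 1) - 1. Suppose k maximizes μ_m over all m. Let W_k be the scheme with rows h_{k+1}, h_{k+2}, ..., with horizontal slopes ν_i = (1/i)∑_{j=1}^i(h_{k+j} + j - 1) - 1. Then for every i, ν_i + k ≤ μ_k. -/
open Finset

/-
Clearing denominators, `m * μ_m = ∑_{j<m} (h_{j+1} + j) - m`. Splitting the sum for `μ_{k+i}`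
after its first `k` terms gives `(k+i) μ_{k+i} = k μ_k + i ν_i + i k`, where `ν` are the slopes of
the rows after the `k`-th. Maximality `μ_{k+i} ≤ μ_k` then turns this into `i ν_i + i k ≤ i μ_k`.
-/

/-- The `m`-th horizontal slope `μ_m = (1/m) ∑_{j=1}^m (h_j + j - 1) - 1` of a block
diagram with row lengths `h 1, h 2, ...`. -/
noncomputable def horizSlope (h : ℕ → ℝ) (m : ℕ) : ℝ :=
  (∑ j ∈ Finset.range m, (h (j + 1) + (j : ℝ))) / m - 1

-- Also holds at `m = 0`, where `horizSlope h 0 = -1` is a junk value.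
theorem mul_horizSlope (h : ℕ → ℝ) (m : ℕ) :
    m * horizSlope h m = ∑ j ∈ range m, (h (j + 1) + (j : ℝ)) - m := by
  rcases eq_or_ne m 0 with rfl | hm
  · simp
  · have : (m : ℝ) ≠ 0 := by exact_mod_cast hm
    rw [horizSlope]
    field_simp

theorem add_mul_horizSlope_add (h : ℕ → ℝ) (k i : ℕ) :
    (k + i : ℝ) * horizSlope h (k + i) =
      k * horizSlope h k + i * horizSlope (fun j => h (k + j)) i + i * k := by
  rw [← Nat.cast_add, mul_horizSlope, mul_horizSlope, mul_horizSlope, sum_range_add]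
  simp only [Nat.cast_add, sum_add_distrib, sum_const, card_range, nsmul_eq_mul, add_assoc]
  ring

theorem horizSlope_shift_add_le {h : ℕ → ℝ} {k i : ℕ} (hi : 0 < i)
    (hmax : horizSlope h (k + i) ≤ horizSlope h k) :
    horizSlope (fun j => h (k + j)) i + k ≤ horizSlope h k := by
  have hsplit := add_mul_horizSlope_add h k i
  have hi' : (0 : ℝ) < i := by exact_mod_cast hi
  refine le_of_mul_le_mul_left ?_ hi'
  calc (i : ℝ) * (horizSlope (fun j => h (k + j)) i + k)
      = (k + i) * horizSlope h (k + i) - k * horizSlope h k := by rw [hsplit]; ring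
    _ ≤ (k + i) * horizSlope h k - k * horizSlope h k := by gcongr
    _ = i * horizSlope h k := by ring

theorem stmt14_general (h : ℕ → ℝ) (r k : ℕ)
    (hmax : ∀ m, 1 ≤ m → m ≤ r → horizSlope h m ≤ horizSlope h k) :
    ∀ i, 1 ≤ i → i ≤ r - k →
      horizSlope (fun j => h (k + j)) i + k ≤ horizSlope h k :=
  fun i hi hir => horizSlope_shift_add_le hi (hmax (k + i) (by omega) (by omega))

/-- (Nesting inequality, rank 1 horizontal case.) Let `Z` be a monomial scheme with `r`
rows of non-increasing positive lengths `h 1 ≥ h 2 ≥ ⋯` and horizontal slopes `μ_m`.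
Suppose `k` maximizes `μ_m` over all `m`. Let `W_k` be the scheme with rows
`h_{k+1}, h_{k+2}, …`, with horizontal slopes `ν_i`. Then for every `i`,
`ν_i + k ≤ μ_k`. -/
theorem stmt14 (h : ℕ → ℝ) (r k : ℕ) (hk : 1 ≤ k) (hkr : k ≤ r)
    (hpos : ∀ j, 1 ≤ j → j ≤ r → 1 ≤ h j)
    (hrow : ∀ j, 1 ≤ j → j < r → h (j + 1) ≤ h j)
    (hmax : ∀ m, 1 ≤ m → m ≤ r → horizSlope h m ≤ horizSlope h k) :
    ∀ i, 1 ≤ i → i ≤ r - k →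
      horizSlope (fun j => h (k + j)) i + k ≤ horizSlope h k :=
  stmt14_general h r k hmax
end
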